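/- Let W ≤ GL(V) be a nontrivial irreducible well-generated complex reflection group, and let W_X be a proper parabolic subgroup of W (i.e. W_X ≠ W, associated to a flat X). Then the set R ∖ W_X of reflections of W not lying in W_X generates the whole group W. -/

import Mathlib

open scoped BigOperators

noncomputable section

namespace CD

variable {V : Type*} [AddCommGroup V] [Module ℂ V]

/-- A unitary reflection: an invertible linear map whose fixed space is a hyperplane. -/
def IsReflection (τ : (V →ₗ[ℂ] V)ˣ) : Prop :=
  Module.finrank ℂ V =
    Module.finrank ℂ (LinearMap.ker ((τ : V →ₗ[ℂ] V) - LinearMap.id)) + 1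

/-- The set of reflections of a subgroup `W ≤ GL(V)`. -/
def reflections (W : Subgroup (V →ₗ[ℂ] V)ˣ) : Set ((V →ₗ[ℂ] V)ˣ) :=
  {τ | τ ∈ W ∧ IsReflection τ}

/-- The set of reflecting hyperplanes of `W`. -/
def hyperplanes (W : Subgroup (V →ₗ[ℂ] V)ˣ) : Set (Submodule ℂ V) :=
  (fun τ : (V →ₗ[ℂ] V)ˣ => LinearMap.ker ((τ : V →ₗ[ℂ] V) - LinearMap.id)) '' reflections W

/-- `W` is a complex reflection group: a finite subgroup of `GL(V)` generated by
its reflections. -/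
def IsReflectionGroup (W : Subgroup (V →ₗ[ℂ] V)ˣ) : Prop :=
  (W : Set ((V →ₗ[ℂ] V)ˣ)).Finite ∧ Subgroup.closure (reflections W) = W

/-- `W` is irreducible: the only `W`-stable subspaces of `V` are `0` and `V`. -/
def IsIrreducible (W : Subgroup (V →ₗ[ℂ] V)ˣ) : Prop :=
  ∀ U : Submodule ℂ V, (∀ w ∈ W, ∀ v ∈ U, (w : V →ₗ[ℂ] V) v ∈ U) → U = ⊥ ∨ U = ⊤

/-- A regular vector: one lying on no reflecting hyperplane. -/
def IsRegular (W : Subgroup (V →ₗ[ℂ] V)ˣ) (v : V) : Prop :=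
  ∀ H ∈ hyperplanes W, v ∉ H

/-- A Coxeter element: an element of `W` with a regular eigenvector of
eigenvalue `exp(2πi/h)`. -/
def IsCoxeterElement (W : Subgroup (V →ₗ[ℂ] V)ˣ) (h : ℕ) (c : (V →ₗ[ℂ] V)ˣ) : Prop :=
  c ∈ W ∧ ∃ v : V, IsRegular W v ∧
    (c : V →ₗ[ℂ] V) v = Complex.exp (2 * Real.pi * Complex.I / (h : ℂ)) • v

/-- A flat: an intersection of reflecting hyperplanes (with `V` itself the empty
intersection). -/
def IsFlat (W : Subgroup (V →ₗ[ℂ] V)ˣ) (X : Submodule ℂ V) : Prop :=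
  ∃ S ⊆ hyperplanes W, X = sInf S

/-- The parabolic subgroup of `W` attached to a subspace `X`: the elements of `W`
fixing `X` pointwise. -/
def parabolic (W : Subgroup (V →ₗ[ℂ] V)ˣ) (X : Submodule ℂ V) :
    Subgroup (V →ₗ[ℂ] V)ˣ where
  carrier := {w | w ∈ W ∧ ∀ x ∈ X, (w : V →ₗ[ℂ] V) x = x}
  one_mem' := ⟨W.one_mem, fun _ _ => rfl⟩
  mul_mem' := by
    rintro a b ⟨ha, ha'⟩ ⟨hb, hb'⟩
    refine ⟨W.mul_mem ha hb, fun x hx => ?_⟩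
    have : ((a * b : (V →ₗ[ℂ] V)ˣ) : V →ₗ[ℂ] V) x
        = (a : V →ₗ[ℂ] V) ((b : V →ₗ[ℂ] V) x) := rfl
    rw [this, hb' x hx, ha' x hx]
  inv_mem' := by
    rintro a ⟨ha, ha'⟩
    refine ⟨W.inv_mem ha, fun x hx => ?_⟩
    conv_lhs => rw [← ha' x hx]
    have : ((a⁻¹ : (V →ₗ[ℂ] V)ˣ) : V →ₗ[ℂ] V) ((a : V →ₗ[ℂ] V) x)
        = (((a⁻¹ * a : (V →ₗ[ℂ] V)ˣ) : V →ₗ[ℂ] V)) x := rfl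
    rw [this, inv_mul_cancel]
    rfl

/-- A parabolic tower: a chain `{1} = W₀ ≤ W₁ ≤ ⋯ ≤ Wₙ = W` of parabolic subgroups
attached to a decreasing chain of flats `Xᵢ` with `codim Xᵢ = i`. -/
def IsParabolicTower (W : Subgroup (V →ₗ[ℂ] V)ˣ) (n : ℕ)
    (Wt : ℕ → Subgroup (V →ₗ[ℂ] V)ˣ) : Prop :=
  ∃ Xs : ℕ → Submodule ℂ V,
    (∀ i ≤ n, IsFlat W (Xs i)) ∧
    (∀ i ≤ n, Module.finrank ℂ V = Module.finrank ℂ (Xs i) + i) ∧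
    (∀ i, i < n → Xs (i + 1) ≤ Xs i) ∧
    (∀ i ≤ n, Wt i = parabolic W (Xs i)) ∧
    (∀ i, i < n → Wt i ≤ Wt (i + 1)) ∧
    Wt 0 = ⊥ ∧ Wt n = W

/-- The weighted Laplacian attached to a set of reflections and a weight function. -/
def lap (Rs : Set ((V →ₗ[ℂ] V)ˣ)) (wt : (V →ₗ[ℂ] V)ˣ → ℂ) : V →ₗ[ℂ] V :=
  ∑ᶠ τ ∈ Rs, wt τ • ((LinearMap.id : V →ₗ[ℂ] V) - (τ : V →ₗ[ℂ] V))

/-!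
The subgroup `W'` generated by the reflections outside `W_X` is normal in `W`: reflections outside
`W_X` lie in `W'`, and those inside `W_X` permute the reflections outside `W_X` by conjugation.
So the set `T` of reflections not in `W'` is stable under conjugation by `W`, and its common fixed
space is `W`-stable. Every element of `T` lies in `W_X`, so that fixed space contains `X ≠ 0`, and by
irreducibility it is all of `V`: each element of `T` is the identity, which is not a reflection.
Hence `W'` contains every reflection, and so all of `W`.
-/

theorem _root_.Subgroup.normalizer_inf_normalizer_le_normalizer_diff {G : Type*} [Group G]
    (s t : Set G) : Subgroup.normalizer s ⊓ Subgroup.normalizer t ≤ Subgroup.normalizer (s \ t) :=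
  fun _ ⟨hs, ht⟩ h => and_congr (hs h) (not_congr (ht h))

theorem _root_.Subgroup.closure_le_normalizer_closure_diff {G : Type*} [Group G] {R : Set G}
    {P : Subgroup G} (hR : P ≤ Subgroup.normalizer R) :
    Subgroup.closure R ≤ Subgroup.normalizer (Subgroup.closure (R \ P)) := by
  have hP : P ≤ Subgroup.normalizer (R \ P) :=
    (le_inf hR P.le_normalizer).trans (Subgroup.normalizer_inf_normalizer_le_normalizer_diff _ _)
  refine (Subgroup.closure_le _).2 fun r hr => ?_
  by_cases hrP : r ∈ P
  · exact Subgroup.normalizer_le_normalizer_closure _ (hP hrP)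
  · exact Subgroup.le_normalizer (Subgroup.subset_closure ⟨hr, hrP⟩)

theorem not_isReflection_one : ¬ IsReflection (1 : (V →ₗ[ℂ] V)ˣ) := by
  rw [IsReflection, Units.val_one, ← Module.End.one_eq_id, sub_self, LinearMap.ker_zero,
    finrank_top]
  omega

theorem IsReflection.conj {τ : (V →ₗ[ℂ] V)ˣ} (hτ : IsReflection τ) (w : (V →ₗ[ℂ] V)ˣ) :
    IsReflection (w * τ * w⁻¹) := by
  have hker : LinearMap.ker (((w * τ * w⁻¹ : (V →ₗ[ℂ] V)ˣ) : V →ₗ[ℂ] V) - LinearMap.id) =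
      (LinearMap.ker ((τ : V →ₗ[ℂ] V) - LinearMap.id)).map
        (LinearMap.GeneralLinearGroup.toLinearEquiv w : V →ₗ[ℂ] V) := by
    ext v
    simp only [LinearMap.mem_ker, Submodule.mem_map_equiv, LinearMap.sub_apply,
      LinearMap.id_apply, sub_eq_zero]
    exact (LinearMap.GeneralLinearGroup.toLinearEquiv w).eq_symm_apply.symm
  rw [IsReflection, hker, LinearEquiv.finrank_map_eq]
  exact hτ

theorem le_normalizer_reflections (W : Subgroup (V →ₗ[ℂ] V)ˣ) :
    W ≤ Subgroup.normalizer (reflections W) :=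
  Subgroup.le_set_normalizer_iff.2 fun w hw _ hτ =>
    ⟨W.mul_mem (W.mul_mem hw hτ.1) (W.inv_mem hw), hτ.2.conj w⟩

theorem parabolic_le (W : Subgroup (V →ₗ[ℂ] V)ˣ) (X : Submodule ℂ V) : parabolic W X ≤ W :=
  fun _ hw => hw.1

theorem parabolic_bot (W : Subgroup (V →ₗ[ℂ] V)ˣ) : parabolic W ⊥ = W := by
  refine le_antisymm (parabolic_le W ⊥) fun w hw => ⟨hw, fun x hx => ?_⟩
  rw [(Submodule.mem_bot ℂ).1 hx, map_zero]

theorem IsIrreducible.eq_one_of_le_normalizer_of_fixes {W : Subgroup (V →ₗ[ℂ] V)ˣ} (hirr : IsIrreducible W)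
    {T : Set (V →ₗ[ℂ] V)ˣ} (hT : W ≤ Subgroup.normalizer T) {x : V} (hx : x ≠ 0)
    (hfix : ∀ τ ∈ T, (τ : V →ₗ[ℂ] V) x = x) : ∀ τ ∈ T, τ = 1 := by
  set U : Submodule ℂ V := ⨅ τ ∈ T, LinearMap.ker ((τ : V →ₗ[ℂ] V) - LinearMap.id)
  have hmemU : ∀ v, v ∈ U ↔ ∀ τ ∈ T, (τ : V →ₗ[ℂ] V) v = v := by
    simp [U, sub_eq_zero]
  have hU : U = ⊤ := by
    refine (hirr U fun w hw v hv => ?_).resolve_left fun hU => hx ?_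
    · rw [hmemU] at hv ⊢
      intro τ hτ
      have hconj : ((w⁻¹ * τ * w : (V →ₗ[ℂ] V)ˣ) : V →ₗ[ℂ] V) v = v :=
        hv _ ((Subgroup.mem_set_normalizer_iff''.1 (hT hw) τ).1 hτ)
      calc (τ : V →ₗ[ℂ] V) ((w : V →ₗ[ℂ] V) v)
          = ((w * (w⁻¹ * τ * w) : (V →ₗ[ℂ] V)ˣ) : V →ₗ[ℂ] V) v := by
            rw [show w * (w⁻¹ * τ * w) = τ * w by group]; rfl
        _ = (w : V →ₗ[ℂ] V) v := by rw [Units.val_mul, Module.End.mul_apply, hconj]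
    · exact (Submodule.mem_bot ℂ).1 (hU ▸ (hmemU x).2 hfix)
  intro τ hτ
  exact Units.ext <| LinearMap.ext fun v => (hmemU v).1 (hU ▸ Submodule.mem_top) τ hτ

theorem reflections_outside_proper_parabolic_generate_general
    (W : Subgroup (V →ₗ[ℂ] V)ˣ)
    (hW : IsReflectionGroup W) (hirr : IsIrreducible W)
    (X : Submodule ℂ V) (hproper : parabolic W X ≠ W) :
    Subgroup.closure {τ | τ ∈ reflections W ∧ τ ∉ parabolic W X} = W := by
  change Subgroup.closure (reflections W \ parabolic W X) = W
  set W₂ := Subgroup.closure (reflections W \ parabolic W X)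
  have hW₂ : W ≤ Subgroup.normalizer W₂ := by
    conv_lhs => rw [← hW.2]
    exact Subgroup.closure_le_normalizer_closure_diff
      ((parabolic_le W X).trans (le_normalizer_reflections W))
  obtain ⟨x, hxX, hx⟩ := Submodule.ne_bot_iff X |>.1 fun hX => hproper (hX ▸ parabolic_bot W)
  have hfix : ∀ τ ∈ reflections W \ W₂, (τ : V →ₗ[ℂ] V) x = x := by
    rintro τ ⟨hτ, hτW₂⟩
    have hτX : τ ∈ parabolic W X :=
      by_contra fun hτX => hτW₂ (Subgroup.subset_closure ⟨hτ, hτX⟩)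
    exact hτX.2 x hxX
  have hT_one := hirr.eq_one_of_le_normalizer_of_fixes ((le_inf (le_normalizer_reflections W) hW₂).trans
    (Subgroup.normalizer_inf_normalizer_le_normalizer_diff _ _)) hx hfix
  have hR : reflections W ⊆ W₂ := fun τ hτ => by
    by_contra hτW₂
    exact not_isReflection_one (hT_one τ ⟨hτ, hτW₂⟩ ▸ hτ.2)
  refine le_antisymm ((Subgroup.closure_le W).2 fun τ hτ => hτ.1.1) ?_
  conv_lhs => rw [← hW.2]
  exact (Subgroup.closure_le W₂).2 hR

/-- In a nontrivial irreducible well-generated complex reflection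
group `W`, the reflections lying outside any proper parabolic subgroup `W_X`
generate the whole group `W`. -/
theorem reflections_outside_proper_parabolic_generate
    [FiniteDimensional ℂ V] (n : ℕ) (hn : Module.finrank ℂ V = n)
    (W : Subgroup (V →ₗ[ℂ] V)ˣ)
    (hW : IsReflectionGroup W) (hnontrivial : W ≠ ⊥) (hirr : IsIrreducible W)
    (h : ℕ) (hh : h * n = (reflections W).ncard + (hyperplanes W).ncard)
    (hwellgen : ∃ c, IsCoxeterElement W h c)
    (X : Submodule ℂ V) (hX : IsFlat W X) (hproper : parabolic W X ≠ W) :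
    Subgroup.closure {τ | τ ∈ reflections W ∧ τ ∉ parabolic W X} = W :=
  reflections_outside_proper_parabolic_generate_general W hW hirr X hproper

end CD
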